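/- arXiv:1404.5178 — 3 statements merged into one kernel-verified Lean document; each statement's English description precedes it below -/
import Mathlib

section
/- Let ℓ ≥ 3 be a prime and k a positive integer with k ≤ ℓ − 2. The set M_{k,ℓ} := { j ∈ (ℤ/ℓℤ)* : ⟨kj⟩_ℓ + ⟨j⟩_ℓ < ℓ } has cardinality (ℓ − 1)/2. -/
/-! Negation `j ↦ -j` is an involution of `(ℤ/ℓℤ)ˣ` that swaps `M_{k,ℓ}` with its complement:
for nonzero residues `a`, `b` with `a + b ≠ 0` we have `⟨-a⟩ + ⟨-b⟩ = 2ℓ - (⟨a⟩ + ⟨b⟩)` and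
`⟨a⟩ + ⟨b⟩ ≠ ℓ`. Taking `a = kj`, `b = j`, the hypothesis `1 ≤ k ≤ ℓ - 2` ensures that
`k` and `k + 1` are units mod `ℓ`. Hence `M_{k,ℓ}` contains exactly half of the `ℓ - 1` units. -/

theorem Nat.card_subtype_eq_card_subtype_not_of_equiv {α : Type*} {p : α → Prop} (σ : α ≃ α)
    (h : ∀ x, p x ↔ ¬ p (σ x)) : Nat.card {x // p x} = Nat.card {x // ¬ p x} :=
  Nat.card_congr (σ.subtypeEquiv h)

theorem Nat.two_mul_card_subtype_of_equiv {α : Type*} [Finite α] {p : α → Prop} (σ : α ≃ α)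
    (h : ∀ x, p x ↔ ¬ p (σ x)) : 2 * Nat.card {x // p x} = Nat.card α := by
  classical
  have := Fintype.ofFinite α
  have hle := Fintype.card_subtype_le p
  rw [two_mul]
  nth_rewrite 2 [Nat.card_subtype_eq_card_subtype_not_of_equiv σ h]
  simp only [Nat.card_eq_fintype_card, Fintype.card_subtype_compl]
  omega

namespace ZMod

theorem natCast_ne_zero_of_pos_of_lt {n k : ℕ} (hk0 : 0 < k) (hkn : k < n) : (k : ZMod n) ≠ 0 := by
  rw [Ne, natCast_eq_zero_iff]
  exact fun hdvd => (Nat.le_of_dvd hk0 hdvd).not_gt hkn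

variable {n : ℕ} [NeZero n] {a b : ZMod n}

theorem val_add_val_ne_of_add_ne_zero (hab : a + b ≠ 0) : a.val + b.val ≠ n := by
  intro h
  apply hab
  rw [← val_eq_zero, val_add, h, Nat.mod_self]

theorem val_neg_add_val_neg (ha : a ≠ 0) (hb : b ≠ 0) :
    (-a).val + (-b).val = 2 * n - (a.val + b.val) := by
  have := a.val_lt
  have := b.val_lt
  rw [neg_val, neg_val, if_neg ha, if_neg hb]
  omega

theorem val_add_val_lt_iff_not_val_neg_add_val_neg_lt (ha : a ≠ 0) (hb : b ≠ 0)
    (hab : a + b ≠ 0) : a.val + b.val < n ↔ ¬ (-a).val + (-b).val < n := by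
  have := val_add_val_ne_of_add_ne_zero hab
  have := a.val_lt
  have := b.val_lt
  rw [val_neg_add_val_neg ha hb]
  omega

end ZMod

theorem stmt0_general (ℓ : ℕ) [Fact ℓ.Prime] (k : ℕ) (hk1 : 1 ≤ k)
    (hk2 : k ≤ ℓ - 2) :
    Nat.card {j : (ZMod ℓ)ˣ //
      ((k : ZMod ℓ) * (j : ZMod ℓ)).val + (j : ZMod ℓ).val < ℓ} = (ℓ - 1) / 2 := by
  have hk : (k : ZMod ℓ) ≠ 0 := ZMod.natCast_ne_zero_of_pos_of_lt (by omega) (by omega)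
  have hk_succ : ((k + 1 : ℕ) : ZMod ℓ) ≠ 0 :=
    ZMod.natCast_ne_zero_of_pos_of_lt (by omega) (by omega)
  have hswap : ∀ j : (ZMod ℓ)ˣ,
      ((k : ZMod ℓ) * j).val + (j : ZMod ℓ).val < ℓ ↔
        ¬ ((k : ZMod ℓ) * ↑(-j)).val + (↑(-j) : ZMod ℓ).val < ℓ := by
    intro j
    rw [Units.val_neg, mul_neg]
    refine ZMod.val_add_val_lt_iff_not_val_neg_add_val_neg_lt (mul_ne_zero hk j.ne_zero)
      j.ne_zero ?_
    rw [← add_one_mul]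
    push_cast at hk_succ
    exact mul_ne_zero hk_succ j.ne_zero
  have hhalf := Nat.two_mul_card_subtype_of_equiv (Equiv.neg _) hswap
  rw [Nat.card_eq_fintype_card (α := (ZMod ℓ)ˣ), ZMod.card_units] at hhalf
  omega

/-- For a prime `ℓ ≥ 3` and `1 ≤ k ≤ ℓ - 2`, the set
`M_{k,ℓ} = {j ∈ (ℤ/ℓℤ)* : ⟨kj⟩_ℓ + ⟨j⟩_ℓ < ℓ}` has cardinality `(ℓ-1)/2`. -/
theorem stmt0 (ℓ : ℕ) [Fact ℓ.Prime] (hℓ : 3 ≤ ℓ) (k : ℕ) (hk1 : 1 ≤ k)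
    (hk2 : k ≤ ℓ - 2) :
    Nat.card {j : (ZMod ℓ)ˣ //
      ((k : ZMod ℓ) * (j : ZMod ℓ)).val + (j : ZMod ℓ).val < ℓ} = (ℓ - 1) / 2 :=
  stmt0_general ℓ k hk1 hk2
end

section
/- Let a ≥ 1, d ≥ 1 with not both a = 1 and d = 1, let b ≥ 0 and e ≥ 1 with not both b = 0 and e = 1, and suppose 3 ∤ d and 3 ∤ e. Then the polynomials Φ_{3^a d}(X) and Φ_{3^b e}(−X² − X) have no common complex root; consequently their resultant is nonzero. -/
open Polynomial

/-!
If `z` is a root of `Φ_n` and `-z² - z = -z(z + 1)` is a root of `Φ_m`, then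
`‖z‖ = ‖z + 1‖ = 1`; conjugating, `z̄ = z⁻¹` and `z̄ + 1 = (z + 1)⁻¹`, which forces
`z² + z + 1 = 0`. Hence `z³ = 1` and `n ∣ 3`, impossible for `n = 3ᵃd ≠ 3` with `a ≥ 1`.
So the two polynomials are coprime over `ℂ`, and their resultant is nonzero already
over `ℤ` because `ℤ → ℂ` is injective.
-/

/-- The resultant of two polynomials, as the determinant of their Sylvester matrix. -/
noncomputable def sylvesterResultant {R : Type*} [CommRing R] (p q : Polynomial R) : R :=
  (Matrix.of fun (i j : Fin (q.natDegree + p.natDegree)) =>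
    if (i : ℕ) < q.natDegree then
      (if (i : ℕ) ≤ (j : ℕ) then p.coeff ((j : ℕ) - (i : ℕ)) else 0)
    else
      (if (i : ℕ) - q.natDegree ≤ (j : ℕ) then
        q.coeff ((j : ℕ) - ((i : ℕ) - q.natDegree)) else 0)).det

theorem sylvesterResultant_eq_resultant {R : Type*} [CommRing R] (p q : R[X]) :
    sylvesterResultant p q = resultant q p := by
  rw [sylvesterResultant, resultant, ← Matrix.det_transpose]
  congr 1
  ext i j
  induction j using Fin.addCases with
  | left j =>
    simp only [sylvester, Matrix.of_apply, Matrix.transpose_apply, Fin.addCases_left,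
      Fin.val_castAdd, Set.mem_Icc, j.isLt, if_true]
    split_ifs <;> first | rfl | omega | (apply coeff_eq_zero_of_natDegree_lt; omega)
  | right j =>
    simp only [sylvester, Matrix.of_apply, Matrix.transpose_apply, Fin.addCases_right,
      Fin.val_natAdd, Set.mem_Icc, add_tsub_cancel_left, not_lt.2 (Nat.le_add_right _ _),
      if_false]
    split_ifs <;> first | rfl | omega | (apply coeff_eq_zero_of_natDegree_lt; omega)

theorem resultant_ne_zero_of_isCoprime_map {R K : Type*} [CommRing R] [Field K] (φ : R →+* K)
    (hφ : Function.Injective φ) {f g : R[X]} (h : IsCoprime (f.map φ) (g.map φ)) :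
    resultant f g ≠ 0 := by
  rw [← map_ne_zero_iff φ hφ, ← resultant_map_map, ← natDegree_map_eq_of_injective hφ f,
    ← natDegree_map_eq_of_injective hφ g]
  exact resultant_ne_zero _ _ h

theorem Polynomial.ne_zero_of_isRoot_cyclotomic {R : Type*} [Ring R] [Nontrivial R] {n : ℕ}
    {z : R} (h : (cyclotomic n R).IsRoot z) : n ≠ 0 := by
  rintro rfl
  simp at h

theorem Polynomial.isPrimitiveRoot_of_isRoot_cyclotomic {R : Type*} [CommRing R] [IsDomain R]
    [CharZero R] {n : ℕ} {μ : R} (h : (cyclotomic n R).IsRoot μ) : IsPrimitiveRoot μ n :=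
  (isRoot_cyclotomic_iff_charZero (Nat.pos_of_ne_zero (ne_zero_of_isRoot_cyclotomic h))).1 h

theorem Complex.norm_eq_one_of_isRoot_cyclotomic {n : ℕ} {z : ℂ}
    (h : (cyclotomic n ℂ).IsRoot z) : ‖z‖ = 1 :=
  (isPrimitiveRoot_of_isRoot_cyclotomic h).norm'_eq_one (ne_zero_of_isRoot_cyclotomic h)

theorem Complex.sq_add_self_add_one_eq_zero_of_norm_eq_one {z : ℂ} (hz : ‖z‖ = 1)
    (hz1 : ‖z + 1‖ = 1) : z ^ 2 + z + 1 = 0 := by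
  have h1 : z * starRingEnd ℂ z = 1 := by
    rw [Complex.mul_conj, Complex.normSq_eq_norm_sq, hz]
    norm_num
  have h2 : (z + 1) * (starRingEnd ℂ z + 1) = 1 := by
    have h := Complex.mul_conj (z + 1)
    rw [map_add, map_one] at h
    rw [h, Complex.normSq_eq_norm_sq, hz1]
    norm_num
  have hconj : starRingEnd ℂ z = -1 - z := by linear_combination h2 - h1
  linear_combination z * hconj - h1

theorem Complex.dvd_three_of_isRoot_cyclotomic_of_isRoot_cyclotomic_neg_sq_sub {n m : ℕ} {z : ℂ}
    (hn : (cyclotomic n ℂ).IsRoot z) (hm : (cyclotomic m ℂ).IsRoot (-z ^ 2 - z)) : n ∣ 3 := by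
  have hz := norm_eq_one_of_isRoot_cyclotomic hn
  have hz1 : ‖z + 1‖ = 1 := by
    have hw := norm_eq_one_of_isRoot_cyclotomic hm
    rwa [show -z ^ 2 - z = -(z * (z + 1)) by ring, norm_neg, norm_mul, hz, one_mul] at hw
  have hz3 : z ^ 3 = 1 := by
    linear_combination (z - 1) * sq_add_self_add_one_eq_zero_of_norm_eq_one hz hz1
  exact ((isPrimitiveRoot_of_isRoot_cyclotomic hn).pow_eq_one_iff_dvd 3).1 hz3

theorem Nat.eq_one_and_eq_one_of_pow_mul_dvd_self {p a d : ℕ} (hp : 1 < p) (ha : 1 ≤ a)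
    (h : p ^ a * d ∣ p) : a = 1 ∧ d = 1 := by
  have hd : d ≠ 0 := by
    rintro rfl
    simp [Nat.pos_iff_ne_zero.1 (zero_lt_one.trans hp)] at h
  have hle := Nat.le_of_dvd (zero_lt_one.trans hp) h
  have hpa : p ^ a ≤ p ^ 1 := (Nat.le_mul_of_pos_right _ (Nat.pos_of_ne_zero hd)).trans (by simpa)
  have ha1 : a = 1 := le_antisymm ((Nat.pow_le_pow_iff_right hp).1 hpa) ha
  subst ha1
  have hd1 : d ≤ 1 := Nat.le_of_mul_le_mul_left (by simpa using hle) (zero_lt_one.trans hp)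
  exact ⟨rfl, by omega⟩

theorem stmt11_general (a d b e : ℕ) (ha : 1 ≤ a) (had : ¬(a = 1 ∧ d = 1)) :
    (¬ ∃ z : ℂ, (cyclotomic (3 ^ a * d) ℂ).eval z = 0 ∧
        ((cyclotomic (3 ^ b * e) ℂ).comp (-X ^ 2 - X)).eval z = 0) ∧
    sylvesterResultant (cyclotomic (3 ^ a * d) ℤ)
        ((cyclotomic (3 ^ b * e) ℤ).comp (-X ^ 2 - X)) ≠ 0 := by
  have noCommonRoot : ¬ ∃ z : ℂ, (cyclotomic (3 ^ a * d) ℂ).eval z = 0 ∧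
      ((cyclotomic (3 ^ b * e) ℂ).comp (-X ^ 2 - X)).eval z = 0 := by
    rintro ⟨z, hz, hw⟩
    refine had (Nat.eq_one_and_eq_one_of_pow_mul_dvd_self (p := 3) (by norm_num) ha ?_)
    exact Complex.dvd_three_of_isRoot_cyclotomic_of_isRoot_cyclotomic_neg_sq_sub hz
      (by simpa [eval_comp] using hw)
  refine ⟨noCommonRoot, ?_⟩
  rw [sylvesterResultant_eq_resultant]
  refine resultant_ne_zero_of_isCoprime_map (Int.castRingHom ℂ) Int.cast_injective ?_
  rw [Polynomial.map_comp, map_cyclotomic, map_cyclotomic,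
    isCoprime_iff_aeval_ne_zero_of_isAlgClosed ℂ ℂ]
  intro z
  simp only [coe_aeval_eq_eval, Polynomial.map_sub, Polynomial.map_neg, Polynomial.map_pow,
    map_X]
  by_contra! h
  exact noCommonRoot ⟨z, h.2, h.1⟩

/-- If `a ≥ 1`, `d ≥ 1`, not both `a = 1` and `d = 1`, `b ≥ 0`, `e ≥ 1`, not both
`b = 0` and `e = 1`, with `3 ∤ d`, `3 ∤ e`, then `Φ_{3^a d}(X)` and
`Φ_{3^b e}(-X²-X)` have no common complex root, and their resultant is nonzero. -/
theorem stmt11 (a d b e : ℕ) (ha : 1 ≤ a) (hd : 1 ≤ d) (had : ¬(a = 1 ∧ d = 1))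
    (he : 1 ≤ e) (hbe : ¬(b = 0 ∧ e = 1)) (h3d : ¬ 3 ∣ d) (h3e : ¬ 3 ∣ e) :
    (¬ ∃ z : ℂ, (cyclotomic (3 ^ a * d) ℂ).eval z = 0 ∧
        ((cyclotomic (3 ^ b * e) ℂ).comp (-X ^ 2 - X)).eval z = 0) ∧
    sylvesterResultant (cyclotomic (3 ^ a * d) ℤ)
        ((cyclotomic (3 ^ b * e) ℤ).comp (-X ^ 2 - X)) ≠ 0 :=
  stmt11_general a d b e ha had
end

section
/- For every x ≥ 2, the number of primes ℓ ≤ x such that ℓ ≡ 1 (mod 3) and ℓ ≤ 441·2^{4α}·β⁴, where ℓ − 1 = 2^α·3^β·m with gcd(m,6) = 1 and β ≤ log x, is O(x^{3/4}(log x)³). -/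
/-!
Write `ℓ - 1 = 2^α 3^β m`. The triple `(α, β, m)` determines `ℓ`, and for the primes counted
each coordinate is small: `2^α ≤ x` gives `α ≤ 2 log x`, `β ≤ log x` by hypothesis, and since
`m 2^α < ℓ ≤ 441 · (2^α)^4 β^4` we get `m^4 < 441 ℓ^3 β^4`, i.e. `m < 5 x^{3/4} log x`.
Counting the triples gives `O(x^{3/4} (log x)^3)`.
-/

open Real Finset

/-- `n = 2^α 3^β m` with `gcd(m, 6) = 1`, encoded as the triple `(α, β, m)`. -/
def twoThreeDecomp (n : ℕ) : ℕ × ℕ × ℕ :=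
  (n.factorization 2, n.factorization 3, n / (2 ^ n.factorization 2 * 3 ^ n.factorization 3))

lemma two_pow_mul_three_pow_mul_div_eq (n : ℕ) :
    2 ^ n.factorization 2 * 3 ^ n.factorization 3 *
      (n / (2 ^ n.factorization 2 * 3 ^ n.factorization 3)) = n :=
  Nat.mul_div_cancel' <| (Nat.Coprime.pow _ _ (by norm_num)).mul_dvd_of_dvd_of_dvd
    (Nat.ordProj_dvd n 2) (Nat.ordProj_dvd n 3)

lemma twoThreeDecomp_injective : Function.Injective twoThreeDecomp := by
  intro a b hab
  simp only [twoThreeDecomp, Prod.mk.injEq] at hab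
  obtain ⟨h2, h3, hm⟩ := hab
  rw [← two_pow_mul_three_pow_mul_div_eq a, hm, h2, h3, two_pow_mul_three_pow_mul_div_eq]

lemma div_two_pow_three_pow_mul_two_pow_le (n : ℕ) :
    n / (2 ^ n.factorization 2 * 3 ^ n.factorization 3) * 2 ^ n.factorization 2 ≤ n := by
  conv_rhs => rw [← two_pow_mul_three_pow_mul_div_eq n]
  rw [mul_comm, mul_right_comm]
  exact Nat.le_mul_of_pos_right _ (by positivity)

lemma factorization_mul_log_le {n : ℕ} (p : ℕ) (hn : n ≠ 0) :
    (n.factorization p : ℝ) * log p ≤ log n := by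
  rw [← log_pow]
  exact log_le_log (by exact_mod_cast Nat.ordProj_pos n p)
    (by exact_mod_cast Nat.ordProj_le p hn)

lemma factorization_two_le_two_mul_log {n : ℕ} (hn : n ≠ 0) :
    (n.factorization 2 : ℝ) ≤ 2 * log n := by
  have h := factorization_mul_log_le 2 hn
  have hlog2 := log_two_gt_d9
  push_cast at h
  nlinarith [(n.factorization 2).cast_nonneg (α := ℝ)]

lemma pow_four_lt_mul_pow_three {m y ℓ c : ℝ} (hm : 0 ≤ m) (hy : 0 < y)
    (hmy : m * y < ℓ) (hℓ : ℓ ≤ c * y ^ 4) : m ^ 4 < c * ℓ ^ 3 := by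
  have hℓ0 : 0 < ℓ := (mul_nonneg hm hy.le).trans_lt hmy
  have key : m ^ 4 * y ^ 4 < c * ℓ ^ 3 * y ^ 4 :=
    calc m ^ 4 * y ^ 4 = (m * y) ^ 4 := by ring
      _ < ℓ ^ 4 := pow_lt_pow_left₀ hmy (by positivity) (by norm_num)
      _ = ℓ ^ 3 * ℓ := by ring
      _ ≤ ℓ ^ 3 * (c * y ^ 4) := by gcongr
      _ = c * ℓ ^ 3 * y ^ 4 := by ring
  exact lt_of_mul_lt_mul_right key (by positivity)

lemma card_Iic_floor_le {t : ℝ} (ht : 0 ≤ t) : ((Iic ⌊t⌋₊).card : ℝ) ≤ t + 1 := by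
  rw [Nat.card_Iic, Nat.cast_add_one]
  gcongr
  exact Nat.floor_le ht

def exceptionalPrimes (x : ℝ) : Set ℕ :=
  {ℓ : ℕ | ℓ.Prime ∧ (ℓ : ℝ) ≤ x ∧ ℓ % 3 = 1 ∧
    ((ℓ - 1).factorization 3 : ℝ) ≤ Real.log x ∧
    (ℓ : ℝ) ≤ 441 * 2 ^ (4 * (ℓ - 1).factorization 2) * ((ℓ - 1).factorization 3 : ℝ) ^ 4}

lemma cofactor_lt_of_mem_exceptionalPrimes {x : ℝ} {ℓ : ℕ} (hℓ : ℓ ∈ exceptionalPrimes x) :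
    (((ℓ - 1) / (2 ^ (ℓ - 1).factorization 2 * 3 ^ (ℓ - 1).factorization 3) : ℕ) : ℝ)
      < 5 * x ^ ((3 : ℝ) / 4) * log x := by
  obtain ⟨hp, hℓx, -, hβ, hℓ⟩ := hℓ
  set α := (ℓ - 1).factorization 2
  set β := (ℓ - 1).factorization 3
  set m := (ℓ - 1) / (2 ^ α * 3 ^ β)
  have hx : 0 ≤ x := (Nat.cast_nonneg ℓ).trans hℓx
  have hlog : 0 ≤ log x := (Nat.cast_nonneg β).trans hβ
  have hmy : (m : ℝ) * 2 ^ α < ℓ := by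
    have : m * 2 ^ α < ℓ :=
      (div_two_pow_three_pow_mul_two_pow_le (ℓ - 1)).trans_lt (by have := hp.two_le; omega)
    exact_mod_cast this
  have hm4 : (m : ℝ) ^ 4 < 441 * β ^ 4 * ℓ ^ 3 :=
    pow_four_lt_mul_pow_three (Nat.cast_nonneg m) (by positivity) hmy
      (by rw [← pow_mul, mul_comm α 4]; linarith)
  have hrpow : (x ^ ((3 : ℝ) / 4)) ^ 4 = x ^ 3 := by
    rw [← rpow_natCast, ← rpow_mul hx]; norm_num
  refine lt_of_pow_lt_pow_left₀ 4 (by positivity) ?_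
  calc (m : ℝ) ^ 4 < 441 * β ^ 4 * ℓ ^ 3 := hm4
    _ ≤ 441 * log x ^ 4 * x ^ 3 := by gcongr
    _ ≤ 625 * log x ^ 4 * x ^ 3 := by gcongr; norm_num
    _ = (5 * x ^ ((3 : ℝ) / 4) * log x) ^ 4 := by rw [mul_pow, mul_pow, hrpow]; ring

lemma twoThreeDecomp_mapsTo_exceptionalPrimes (x : ℝ) :
    Set.MapsTo (fun ℓ ↦ twoThreeDecomp (ℓ - 1)) (exceptionalPrimes x)
      ↑(Iic ⌊2 * log x⌋₊ ×ˢ Iic ⌊log x⌋₊ ×ˢ Iic ⌊5 * x ^ ((3 : ℝ) / 4) * log x⌋₊) := by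
  intro ℓ hℓ
  have hm := cofactor_lt_of_mem_exceptionalPrimes hℓ
  obtain ⟨hp, hℓx, -, hβ, -⟩ := hℓ
  have hn : ℓ - 1 ≠ 0 := by have := hp.two_le; omega
  have hα : ((ℓ - 1).factorization 2 : ℝ) ≤ 2 * log x :=
    (factorization_two_le_two_mul_log hn).trans <| by
      gcongr
      exact (Nat.cast_le.mpr (Nat.sub_le ℓ 1)).trans hℓx
  simp only [twoThreeDecomp, coe_product, Set.mem_prod, mem_coe, mem_Iic]
  exact ⟨Nat.le_floor hα, Nat.le_floor hβ, Nat.le_floor hm.le⟩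

lemma card_exceptionalPrimes_le {x : ℝ} (hx : 1 ≤ x) :
    (Nat.card (exceptionalPrimes x) : ℝ)
      ≤ (2 * log x + 1) * (log x + 1) * (5 * x ^ ((3 : ℝ) / 4) * log x + 1) := by
  have hlog := log_nonneg hx
  have hinj : Set.InjOn (fun ℓ ↦ twoThreeDecomp (ℓ - 1)) (exceptionalPrimes x) := by
    intro a ha b hb hab
    have := twoThreeDecomp_injective hab
    have := ha.1.two_le
    have := hb.1.two_le
    omega
  have hcard := Set.ncard_le_ncard_of_injOn _ (twoThreeDecomp_mapsTo_exceptionalPrimes x) hinj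
    (finite_toSet _)
  rw [Set.ncard_coe_finset, card_product, card_product, ← Nat.card_coe_set_eq] at hcard
  calc (Nat.card (exceptionalPrimes x) : ℝ)
      ≤ (#(Iic ⌊2 * log x⌋₊) : ℝ) * (#(Iic ⌊log x⌋₊) * #(Iic ⌊5 * x ^ ((3 : ℝ) / 4) * log x⌋₊)) := by
        exact_mod_cast hcard
    _ ≤ (2 * log x + 1) * ((log x + 1) * (5 * x ^ ((3 : ℝ) / 4) * log x + 1)) := by
        gcongr <;> exact card_Iic_floor_le (by positivity)
    _ = _ := by ring

/-- The number of primes `ℓ ≤ x` with `ℓ ≡ 1 (mod 3)` satisfying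
`ℓ ≤ 441·2^{4α}·β⁴` (where `ℓ - 1 = 2^α 3^β m`, `gcd(m,6) = 1`) and `β ≤ log x`
is `O(x^{3/4} (log x)³)`. -/
theorem stmt16 :
    ∃ C : ℝ, 0 < C ∧ ∀ x : ℝ, 2 ≤ x →
      (Nat.card {ℓ : ℕ | ℓ.Prime ∧ (ℓ : ℝ) ≤ x ∧ ℓ % 3 = 1 ∧
          ((ℓ - 1).factorization 3 : ℝ) ≤ Real.log x ∧
          (ℓ : ℝ) ≤ 441 * 2 ^ (4 * (ℓ - 1).factorization 2)
            * ((ℓ - 1).factorization 3 : ℝ) ^ 4} : ℝ)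
        ≤ C * x ^ ((3 : ℝ) / 4) * (Real.log x) ^ 3 := by
  refine ⟨84, by norm_num, fun x hx ↦ ?_⟩
  have hlog : 1 / 2 ≤ log x := by
    have := log_le_log (by norm_num) hx
    linarith [log_two_gt_d9]
  have hrpow : 1 ≤ x ^ ((3 : ℝ) / 4) := one_le_rpow (by linarith) (by norm_num)
  calc (Nat.card (exceptionalPrimes x) : ℝ)
      ≤ (2 * log x + 1) * (log x + 1) * (5 * x ^ ((3 : ℝ) / 4) * log x + 1) :=
        card_exceptionalPrimes_le (by linarith)
    _ ≤ (4 * log x) * (3 * log x) * (7 * x ^ ((3 : ℝ) / 4) * log x) := by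
        gcongr <;> nlinarith
    _ = 84 * x ^ ((3 : ℝ) / 4) * log x ^ 3 := by ring
end
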